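/- Under Condition (C), for every θ ∈ [0,2π) the function p_θ has an inverse q_θ : [0, p_θ(ℓ(θ)−)) → [0, ℓ(θ)) which is a strictly increasing continuous bijection with q_θ(0) = 0; q_θ is differentiable with q′_θ(r) = 1 / p′_θ(q_θ(r)) and lim_{r↓0} q′_θ(r) = 1; and for all 0 ≤ r₁ ≤ r₂ < p_θ(ℓ(θ)−) one has q′_θ(r₂) − q′_θ(r₁) = ∫_{r₁}^{r₂} 2 b(q_θ(r),θ) / ( s(q_θ(r),θ)² · (p′_θ(q_θ(r)))² ) dr, i.e. q″_θ(r) = 2 b(q_θ(r),θ) / ( s(q_θ(r),θ)² (p′_θ(q_θ(r)))² ) for Lebesgue-a.e. r. -/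

import Mathlib

open MeasureTheory Set
open scoped Classical ENNReal

/-- `p′_θ(y) = exp(−2∫₀^y b(z,θ)/s(z,θ)² dz)`, the derivative of the radial scale function. -/
noncomputable def pprime (b s : ℝ → ℝ → ℝ) (θ y : ℝ) : ℝ :=
  Real.exp (-2 * ∫ z in (0:ℝ)..y, b z θ / (s z θ) ^ 2)

/-- The radial scale function `p_θ(r) = ∫₀^r p′_θ(y) dy`. -/
noncomputable def pscale (b s : ℝ → ℝ → ℝ) (θ r : ℝ) : ℝ :=
  ∫ y in (0:ℝ)..r, pprime b s θ y

/-- Condition (C): `ℓ` is measurable and bounded away from zero, `b` and `s` are Borel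
measurable on `Ǐ`, `s` vanishes nowhere on `Ǐ`, `b/s²` and `1/s²` are locally integrable
on `(0,ℓ(θ))` along each ray, and `(1+|b|)/s²` is bounded near the origin. -/
structure CondC (ℓ : ℝ → ℝ≥0∞) (b s : ℝ → ℝ → ℝ) : Prop where
  meas_ell : Measurable ℓ
  ell_pos : 0 < ⨅ θ ∈ Ico (0:ℝ) (2 * Real.pi), ℓ θ
  meas_b : Measurable
    (Set.restrict {q : ℝ × ℝ | 0 < q.1 ∧ ENNReal.ofReal q.1 < ℓ q.2 ∧
      q.2 ∈ Ico (0:ℝ) (2 * Real.pi)} (fun q => b q.1 q.2))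
  meas_s : Measurable
    (Set.restrict {q : ℝ × ℝ | 0 < q.1 ∧ ENNReal.ofReal q.1 < ℓ q.2 ∧
      q.2 ∈ Ico (0:ℝ) (2 * Real.pi)} (fun q => s q.1 q.2))
  s_ne : ∀ θ ∈ Ico (0:ℝ) (2 * Real.pi), ∀ r : ℝ, 0 < r → ENNReal.ofReal r < ℓ θ →
    s r θ ≠ 0
  loc_int_b : ∀ θ ∈ Ico (0:ℝ) (2 * Real.pi), ∀ r₁ r₂ : ℝ, 0 < r₁ → r₁ ≤ r₂ →
    ENNReal.ofReal r₂ < ℓ θ → IntegrableOn (fun z => b z θ / (s z θ) ^ 2) (Icc r₁ r₂)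
  loc_int_s : ∀ θ ∈ Ico (0:ℝ) (2 * Real.pi), ∀ r₁ r₂ : ℝ, 0 < r₁ → r₁ ≤ r₂ →
    ENNReal.ofReal r₂ < ℓ θ → IntegrableOn (fun z => 1 / (s z θ) ^ 2) (Icc r₁ r₂)
  bound_near_origin : ∃ η : ℝ, 0 < η ∧
    ENNReal.ofReal η < (⨅ θ ∈ Ico (0:ℝ) (2 * Real.pi), ℓ θ) ∧
    ∃ C : ℝ, ∀ θ ∈ Ico (0:ℝ) (2 * Real.pi), ∀ r ∈ Ioc (0:ℝ) η,
      (1 + |b r θ|) / (s r θ) ^ 2 ≤ C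

/-- `p_θ(ℓ(θ)−) := sup_{0 ≤ r < ℓ(θ)} p_θ(r)`, as an extended nonnegative real. -/
noncomputable def pEnd (ℓ : ℝ → ℝ≥0∞) (b s : ℝ → ℝ → ℝ) (θ : ℝ) : ℝ≥0∞ :=
  ⨆ r ∈ {r : ℝ | 0 ≤ r ∧ ENNReal.ofReal r < ℓ θ}, ENNReal.ofReal (pscale b s θ r)

/-!
Along the ray `θ` the ratio `b/s²` is integrable on every `[0, R]`, `R < ℓ(θ)`: near the origin
it is bounded by (iii), and away from it (ii) applies. Hence `p′_θ = exp(-2 ∫₀ b/s²)` is positive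
and continuous, `p_θ` is a strictly increasing `C¹` bijection of `[0, ℓ(θ))` onto
`[0, p_θ(ℓ(θ)−))`, and its inverse `q_θ` is continuous (a monotone bijection between intervals) with
`q′_θ = 1/p′_θ ∘ q_θ` by the inverse function rule. Finally `1/p′_θ = exp(2 ∫₀ b/s²)` is the
exponential of an absolutely continuous function, so the fundamental theorem of calculus for
absolutely continuous functions gives `1/p′_θ(x₂) - 1/p′_θ(x₁) = ∫ 2 (b/s²)/p′_θ`; the substitution
`x = q_θ(u)` turns this into the integral identity for `q′_θ`.
-/

open Filter Function Topology

theorem LipschitzOnWith.comp_absolutelyContinuousOnInterval {X : Type*} [PseudoMetricSpace X]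
    {φ : ℝ → X} {F : ℝ → ℝ} {K : NNReal} {a b : ℝ} (hφ : LipschitzOnWith K φ (F '' uIcc a b))
    (hF : AbsolutelyContinuousOnInterval F a b) : AbsolutelyContinuousOnInterval (φ ∘ F) a b := by
  refine squeeze_zero' (Eventually.of_forall fun _ => Finset.sum_nonneg fun _ _ => dist_nonneg)
    ?_ (by simpa using Tendsto.const_mul (K : ℝ) hF)
  filter_upwards [eventually_inf_principal.2 (Eventually.of_forall fun E hE => hE)] with E hE
  rw [Finset.mul_sum]
  exact Finset.sum_le_sum fun i hi =>
    hφ.dist_le_mul _ (mem_image_of_mem F (hE.1 i hi).1) _ (mem_image_of_mem F (hE.1 i hi).2)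

theorem ContDiff.comp_absolutelyContinuousOnInterval {φ F : ℝ → ℝ} {a b : ℝ}
    (hφ : ContDiff ℝ 1 φ) (hF : AbsolutelyContinuousOnInterval F a b) :
    AbsolutelyContinuousOnInterval (φ ∘ F) a b := by
  obtain ⟨K, hK⟩ := hφ.locallyLipschitz.locallyLipschitzOn.exists_lipschitzOnWith_of_compact
    (isCompact_uIcc.image_of_continuousOn hF.continuousOn)
  exact hK.comp_absolutelyContinuousOnInterval hF

theorem AbsolutelyContinuousOnInterval.integral_deriv_comp_mul_deriv {φ F : ℝ → ℝ} {a b : ℝ}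
    (hφ : ContDiff ℝ 1 φ) (hF : AbsolutelyContinuousOnInterval F a b) :
    ∫ x in a..b, deriv φ (F x) * deriv F x = φ (F b) - φ (F a) := by
  rw [← comp_apply (f := φ), ← comp_apply (f := φ) (x := a),
    ← (hφ.comp_absolutelyContinuousOnInterval hF).integral_deriv_eq_sub]
  refine intervalIntegral.integral_congr_ae ?_
  filter_upwards [hF.ae_differentiableAt] with x hx hxab
  exact ((hφ.differentiable one_ne_zero (F x)).hasDerivAt.comp x
    (hx (uIoc_subset_uIcc hxab)).hasDerivAt).deriv.symm

theorem integral_mul_exp_primitive {g : ℝ → ℝ} {a b c : ℝ} (hg : IntervalIntegrable g volume c b)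
    (ha : a ∈ uIcc c b) :
    ∫ x in a..b, g x * Real.exp (∫ t in c..x, g t)
      = Real.exp (∫ t in c..b, g t) - Real.exp (∫ t in c..a, g t) := by
  have hac : uIcc a b ⊆ uIcc c b := uIcc_subset_uIcc ha right_mem_uIcc
  have hG := (hg.absolutelyContinuousOnInterval_intervalIntegral left_mem_uIcc).mono hac
  rw [← hG.integral_deriv_comp_mul_deriv Real.contDiff_exp]
  refine intervalIntegral.integral_congr_ae ?_
  filter_upwards [hg.ae_hasDerivAt_integral] with x hx hxab
  rw [Real.deriv_exp, (hx (hac (uIoc_subset_uIcc hxab)) c left_mem_uIcc).deriv, mul_comm]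

theorem StrictMonoOn.continuousOn_of_ordConnected_image {α β : Type*} [LinearOrder α]
    [TopologicalSpace α] [OrderTopology α] [LinearOrder β] [TopologicalSpace β] [OrderTopology β]
    {f : α → β} {s : Set α} (hf : StrictMonoOn f s) [OrdConnected s] [OrdConnected (f '' s)] :
    ContinuousOn f s := by
  rw [continuousOn_iff_continuous_domRestrict]
  exact continuous_subtype_val.comp (hf.orderIso f s).continuous

theorem HasDerivWithinAt.of_local_left_inverse {𝕜 : Type*} [NontriviallyNormedField 𝕜]
    {f g : 𝕜 → 𝕜} {f' a : 𝕜} {s t : Set 𝕜} (hg : Tendsto g (𝓝[s] a) (𝓝[t] (g a)))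
    (hf : HasDerivWithinAt f f' t (g a)) (hf' : f' ≠ 0) (ha : a ∈ s)
    (hfg : ∀ᶠ x in 𝓝[s] a, f (g x) = x) : HasDerivWithinAt g f'⁻¹ s a :=
  HasFDerivWithinAt.of_local_left_inverse
    (f' := ContinuousLinearEquiv.unitsEquivAut 𝕜 (Units.mk0 f' hf')) hg hf ha hfg

theorem integrableOn_Ioc_of_integrableOn_Icc_of_bounded {f : ℝ → ℝ} {a b C : ℝ}
    (hf : ∀ c ∈ Ioc a b, IntegrableOn f (Icc c b)) (hC : ∀ x ∈ Ioc a b, |f x| ≤ C) :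
    IntegrableOn f (Ioc a b) := by
  rcases le_or_gt b a with hba | hab
  · simp [Ioc_eq_empty_of_le hba]
  set δ : ℕ → ℝ := fun n => (b - a) / (n + 1)
  have hδ (n : ℕ) : 0 < δ n ∧ δ n ≤ b - a :=
    ⟨div_pos (sub_pos.2 hab) n.cast_add_one_pos,
      div_le_self (sub_pos.2 hab).le (le_add_of_nonneg_left n.cast_nonneg)⟩
  have hcover : Ioc a b = ⋃ n, Icc (a + δ n) b := by
    ext x
    simp only [mem_Ioc, mem_iUnion, mem_Icc]
    refine ⟨fun ⟨hax, hxb⟩ => ?_, fun ⟨n, hxn, hxb⟩ => ⟨by linarith [(hδ n).1], hxb⟩⟩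
    obtain ⟨n, hn⟩ := exists_nat_gt ((b - a) / (x - a))
    rw [div_lt_iff₀ (sub_pos.2 hax)] at hn
    have : δ n ≤ x - a := by rw [div_le_iff₀ n.cast_add_one_pos]; nlinarith
    exact ⟨n, by linarith, hxb⟩
  have hmeas : AEStronglyMeasurable f (volume.restrict (Ioc a b)) := by
    rw [hcover, aestronglyMeasurable_iUnion_iff]
    exact fun n => (hf _ ⟨by linarith [(hδ n).1], by linarith [(hδ n).2]⟩).aestronglyMeasurable
  refine Integrable.mono' (g := fun _ => C) (integrableOn_const measure_Ioc_lt_top.ne) hmeas ?_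
  filter_upwards [ae_restrict_mem measurableSet_Ioc] with x hx
  exact (Real.norm_eq_abs _).trans_le (hC x hx)

theorem Set.BijOn.strictMonoOn_invFunOn {α β : Type*} [LinearOrder α] [Preorder β] [Nonempty α]
    {f : α → β} {s : Set α} {t : Set β} (hf : BijOn f s t) (hmono : StrictMonoOn f s) :
    StrictMonoOn (invFunOn f s) t := by
  intro u hu v hv huv
  have hmaps := hf.surjOn.mapsTo_invFunOn
  rwa [← hmono.lt_iff_lt (hmaps hu) (hmaps hv), hf.invOn_invFunOn.2 hu, hf.invOn_invFunOn.2 hv]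

theorem Set.BijOn.continuousOn_invFunOn {α β : Type*} [LinearOrder α] [TopologicalSpace α]
    [OrderTopology α] [LinearOrder β] [TopologicalSpace β] [OrderTopology β] [Nonempty α]
    {f : α → β} {s : Set α} {t : Set β} [OrdConnected s] [OrdConnected t] (hf : BijOn f s t)
    (hmono : StrictMonoOn f s) : ContinuousOn (invFunOn f s) t := by
  have : OrdConnected (invFunOn f s '' t) := by
    rwa [(hf.symm hf.invOn_invFunOn.symm).image_eq]
  exact (hf.strictMonoOn_invFunOn hmono).continuousOn_of_ordConnected_image

def realIco (L : ℝ≥0∞) : Set ℝ := {r | 0 ≤ r ∧ ENNReal.ofReal r < L}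

section realIco

variable {L : ℝ≥0∞} {r : ℝ}

instance ordConnected_realIco : OrdConnected (realIco L) :=
  ⟨fun _ hx _ hy _ hz => ⟨hx.1.trans hz.1, (ENNReal.ofReal_le_ofReal hz.2).trans_lt hy.2⟩⟩

theorem zero_mem_realIco (hL : 0 < L) : (0 : ℝ) ∈ realIco L :=
  ⟨le_rfl, by simpa using hL⟩

theorem mem_realIco_of_le {u : ℝ} (hu : 0 ≤ u) (hur : u ≤ r) (hr : r ∈ realIco L) :
    u ∈ realIco L :=
  ⟨hu, (ENNReal.ofReal_le_ofReal hur).trans_lt hr.2⟩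

theorem Icc_subset_realIco (hr : r ∈ realIco L) : Icc 0 r ⊆ realIco L :=
  ordConnected_realIco.out (mem_realIco_of_le le_rfl hr.1 hr) hr

theorem exists_gt_mem_realIco (hr : r ∈ realIco L) : ∃ R ∈ realIco L, r < R := by
  obtain ⟨R, hR0, hrR, hRL⟩ := ENNReal.lt_iff_exists_real_btwn.1 hr.2
  exact ⟨R, ⟨hR0, hRL⟩, (ENNReal.ofReal_lt_ofReal_iff_of_nonneg hr.1).1 hrR⟩

theorem Icc_mem_nhdsWithin_realIco {R : ℝ} (hrR : r < R) : Icc 0 R ∈ 𝓝[realIco L] r :=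
  mem_nhdsWithin.2 ⟨Iio R, isOpen_Iio, hrR, fun _ hz => ⟨hz.2.1, hz.1.le⟩⟩

theorem realIco_mem_nhdsGE (hr : r ∈ realIco L) : realIco L ∈ 𝓝[≥] r := by
  obtain ⟨R, hR, hrR⟩ := exists_gt_mem_realIco hr
  exact mem_of_superset (Ico_mem_nhdsGE hrR)
    (Ico_subset_Icc_self.trans (ordConnected_realIco.out hr hR))

theorem realIco_mem_nhds (hr0 : 0 < r) (hr : r ∈ realIco L) : realIco L ∈ 𝓝 r := by
  obtain ⟨R, hR, hrR⟩ := exists_gt_mem_realIco hr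
  exact mem_of_superset (Ioo_mem_nhds hr0 hrR)
    (Ioo_subset_Icc_self.trans (Icc_subset_realIco hR))

end realIco

def RatioIntegrable (b s : ℝ → ℝ → ℝ) (θ : ℝ) (L : ℝ≥0∞) : Prop :=
  ∀ R ∈ realIco L, IntervalIntegrable (fun z => b z θ / s z θ ^ 2) volume 0 R

theorem CondC.ratioIntegrable {ℓ : ℝ → ℝ≥0∞} {b s : ℝ → ℝ → ℝ} (h : CondC ℓ b s) {θ : ℝ}
    (hθ : θ ∈ Ico 0 (2 * Real.pi)) : RatioIntegrable b s θ (ℓ θ) := by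
  intro R hR
  obtain ⟨η, hη0, hηℓ, C, hC⟩ := h.bound_near_origin
  have hηθ : ENNReal.ofReal η < ℓ θ := hηℓ.trans_le (iInf₂_le θ hθ)
  set c := min η R
  have hcR : c ≤ R := min_le_right _ _
  have hc : c ∈ realIco (ℓ θ) := mem_realIco_of_le (le_min hη0.le hR.1) hcR hR
  have hnear : IntegrableOn (fun z => b z θ / s z θ ^ 2) (Ioc 0 c) := by
    refine integrableOn_Ioc_of_integrableOn_Icc_of_bounded (C := C)
      (fun c' hc' => h.loc_int_b θ hθ c' c hc'.1 hc'.2 hc.2) fun z hz => ?_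
    calc |b z θ / s z θ ^ 2| = |b z θ| / s z θ ^ 2 := by rw [abs_div, abs_sq]
      _ ≤ (1 + |b z θ|) / s z θ ^ 2 := by gcongr; linarith
      _ ≤ C := hC θ hθ z ⟨hz.1, hz.2.trans (min_le_left _ _)⟩
  rcases hR.1.eq_or_lt with hR0 | hR0
  · simp [← hR0]
  have hfar : IntegrableOn (fun z => b z θ / s z θ ^ 2) (Icc c R) :=
    h.loc_int_b θ hθ c R (lt_min hη0 hR0) hcR hR.2
  rw [intervalIntegrable_iff_integrableOn_Ioc_of_le hR.1, ← Ioc_union_Ioc_eq_Ioc hc.1 hcR]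
  exact hnear.union (hfar.mono_set Ioc_subset_Icc_self)

section RadialScale

variable {b s : ℝ → ℝ → ℝ} {θ : ℝ} {L : ℝ≥0∞}

theorem pprime_pos (y : ℝ) : 0 < pprime b s θ y := Real.exp_pos _

theorem pprime_zero : pprime b s θ 0 = 1 := by simp [pprime]

theorem pscale_zero : pscale b s θ 0 = 0 := intervalIntegral.integral_same

theorem one_div_pprime (y : ℝ) :
    1 / pprime b s θ y = Real.exp (∫ z in (0 : ℝ)..y, 2 * (b z θ / s z θ ^ 2)) := by
  rw [one_div, pprime, ← Real.exp_neg, intervalIntegral.integral_const_mul]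
  ring_nf

theorem continuousOn_pprime (hint : RatioIntegrable b s θ L) :
    ContinuousOn (pprime b s θ) (realIco L) := by
  intro r hr
  obtain ⟨R, hR, hrR⟩ := exists_gt_mem_realIco hr
  have hprim := intervalIntegral.continuousOn_primitive_interval' (hint R hR) left_mem_uIcc
  rw [uIcc_of_le hR.1] at hprim
  refine ContinuousWithinAt.mono_of_mem_nhdsWithin ?_ (Icc_mem_nhdsWithin_realIco hrR)
  exact Real.continuous_exp.continuousWithinAt.comp
    ((hprim r ⟨hr.1, hrR.le⟩).const_mul (-2)) (mapsTo_univ _ _)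

theorem hasDerivWithinAt_pscale (hint : RatioIntegrable b s θ L) {r : ℝ} (hr : r ∈ realIco L) :
    HasDerivWithinAt (pscale b s θ) (pprime b s θ r) (realIco L) r := by
  obtain ⟨R, hR, hrR⟩ := exists_gt_mem_realIco hr
  have hcont : ContinuousOn (pprime b s θ) (Icc 0 R) :=
    (continuousOn_pprime hint).mono (Icc_subset_realIco hR)
  have : Fact (r ∈ Icc 0 R) := ⟨⟨hr.1, hrR.le⟩⟩
  exact (intervalIntegral.integral_hasDerivWithinAt_right
    ((hcont.mono (Icc_subset_Icc_right hrR.le)).intervalIntegrable_of_Icc hr.1)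
    ⟨Icc 0 R, self_mem_nhdsWithin, hcont.aestronglyMeasurable measurableSet_Icc⟩
    (hcont r ⟨hr.1, hrR.le⟩)).mono_of_mem_nhdsWithin (Icc_mem_nhdsWithin_realIco hrR)

theorem hasDerivAt_pscale (hint : RatioIntegrable b s θ L) {r : ℝ} (hr0 : 0 < r)
    (hr : r ∈ realIco L) : HasDerivAt (pscale b s θ) (pprime b s θ r) r :=
  (hasDerivWithinAt_pscale hint hr).hasDerivAt (realIco_mem_nhds hr0 hr)

theorem continuousOn_pscale (hint : RatioIntegrable b s θ L) :
    ContinuousOn (pscale b s θ) (realIco L) :=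
  fun _ hr => (hasDerivWithinAt_pscale hint hr).continuousWithinAt

theorem strictMonoOn_pscale (hint : RatioIntegrable b s θ L) :
    StrictMonoOn (pscale b s θ) (realIco L) :=
  strictMonoOn_of_hasDerivWithinAt_pos ordConnected_realIco.convex (continuousOn_pscale hint)
    (fun _ hr => ((hasDerivWithinAt_pscale hint (interior_subset hr)).hasDerivAt
      (mem_interior_iff_mem_nhds.1 hr)).hasDerivWithinAt)
    (fun _ _ => pprime_pos _)

theorem one_div_pprime_sub_eq_integral (hint : RatioIntegrable b s θ L) {x₁ x₂ : ℝ}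
    (hx₁ : 0 ≤ x₁) (hx₁₂ : x₁ ≤ x₂) (hx₂ : x₂ ∈ realIco L) :
    1 / pprime b s θ x₂ - 1 / pprime b s θ x₁
      = ∫ x in x₁..x₂, 2 * b x θ / (s x θ ^ 2 * pprime b s θ x ^ 2) * pprime b s θ x := by
  rw [one_div_pprime, one_div_pprime,
    ← integral_mul_exp_primitive ((hint x₂ hx₂).const_mul 2) (mem_uIcc_of_le hx₁ hx₁₂)]
  refine intervalIntegral.integral_congr fun x _ => ?_
  have hp := (pprime_pos (b := b) (s := s) (θ := θ) x).ne'
  rw [← one_div_pprime]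
  field_simp

end RadialScale

section RadialScaleInverse

variable {ℓ : ℝ → ℝ≥0∞} {b s : ℝ → ℝ → ℝ} {θ : ℝ}

theorem image_pscale (hint : RatioIntegrable b s θ (ℓ θ)) :
    pscale b s θ '' realIco (ℓ θ) = realIco (pEnd ℓ b s θ) := by
  have hmono := strictMonoOn_pscale hint
  ext u
  constructor
  · rintro ⟨r, hr, rfl⟩
    obtain ⟨R, hR, hrR⟩ := exists_gt_mem_realIco hr
    have h0 : 0 ≤ pscale b s θ r := by
      simpa [pscale_zero] using hmono.monotoneOn (mem_realIco_of_le le_rfl hr.1 hr) hr hr.1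
    refine ⟨h0, ?_⟩
    calc ENNReal.ofReal (pscale b s θ r) < ENNReal.ofReal (pscale b s θ R) :=
          (ENNReal.ofReal_lt_ofReal_iff_of_nonneg h0).2 (hmono hr hR hrR)
      _ ≤ pEnd ℓ b s θ := le_iSup₂ (f := fun r _ => ENNReal.ofReal (pscale b s θ r)) R hR
  · rintro ⟨hu0, hu⟩
    obtain ⟨R, hR, huR⟩ := lt_biSup_iff.1 hu
    have hsurj := (continuousOn_pscale hint).surjOn_Icc (mem_realIco_of_le le_rfl hR.1 hR) hR
    rw [pscale_zero] at hsurj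
    exact hsurj ⟨hu0, ((ENNReal.ofReal_lt_ofReal_iff').1 huR).1.le⟩

theorem bijOn_pscale (hint : RatioIntegrable b s θ (ℓ θ)) :
    BijOn (pscale b s θ) (realIco (ℓ θ)) (realIco (pEnd ℓ b s θ)) :=
  image_pscale hint ▸ (strictMonoOn_pscale hint).injOn.bijOn_image

/-- The inverse `q_θ` of `p_θ : [0, ℓ(θ)) → [0, p_θ(ℓ(θ)−))`; its values outside
`[0, p_θ(ℓ(θ)−))` are junk. -/
noncomputable def pscaleInv (ℓ : ℝ → ℝ≥0∞) (b s : ℝ → ℝ → ℝ) (θ : ℝ) : ℝ → ℝ :=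
  invFunOn (pscale b s θ) (realIco (ℓ θ))

theorem mapsTo_pscaleInv (hint : RatioIntegrable b s θ (ℓ θ)) :
    MapsTo (pscaleInv ℓ b s θ) (realIco (pEnd ℓ b s θ)) (realIco (ℓ θ)) :=
  (bijOn_pscale hint).surjOn.mapsTo_invFunOn

theorem pscale_pscaleInv (hint : RatioIntegrable b s θ (ℓ θ)) {u : ℝ}
    (hu : u ∈ realIco (pEnd ℓ b s θ)) : pscale b s θ (pscaleInv ℓ b s θ u) = u :=
  (bijOn_pscale hint).invOn_invFunOn.2 hu

theorem pscaleInv_pscale (hint : RatioIntegrable b s θ (ℓ θ)) {r : ℝ} (hr : r ∈ realIco (ℓ θ)) :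
    pscaleInv ℓ b s θ (pscale b s θ r) = r :=
  (bijOn_pscale hint).invOn_invFunOn.1 hr

theorem pscaleInv_zero (hint : RatioIntegrable b s θ (ℓ θ)) (hℓ : 0 < ℓ θ) :
    pscaleInv ℓ b s θ 0 = 0 := by
  simpa [pscale_zero] using pscaleInv_pscale hint (zero_mem_realIco hℓ)

theorem strictMonoOn_pscaleInv (hint : RatioIntegrable b s θ (ℓ θ)) :
    StrictMonoOn (pscaleInv ℓ b s θ) (realIco (pEnd ℓ b s θ)) :=
  (bijOn_pscale hint).strictMonoOn_invFunOn (strictMonoOn_pscale hint)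

theorem continuousOn_pscaleInv (hint : RatioIntegrable b s θ (ℓ θ)) :
    ContinuousOn (pscaleInv ℓ b s θ) (realIco (pEnd ℓ b s θ)) :=
  (bijOn_pscale hint).continuousOn_invFunOn (strictMonoOn_pscale hint)

theorem hasDerivWithinAt_pscaleInv (hint : RatioIntegrable b s θ (ℓ θ)) {u : ℝ}
    (hu : u ∈ realIco (pEnd ℓ b s θ)) :
    HasDerivWithinAt (pscaleInv ℓ b s θ) (1 / pprime b s θ (pscaleInv ℓ b s θ u))
      (realIco (pEnd ℓ b s θ)) u := by
  rw [one_div]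
  exact HasDerivWithinAt.of_local_left_inverse
    ((continuousOn_pscaleInv hint u hu).tendsto_nhdsWithin (mapsTo_pscaleInv hint))
    (hasDerivWithinAt_pscale hint (mapsTo_pscaleInv hint hu)) (pprime_pos _).ne' hu
    (eventually_nhdsWithin_of_forall fun _ hv => pscale_pscaleInv hint hv)

theorem tendsto_one_div_pprime_pscaleInv (hint : RatioIntegrable b s θ (ℓ θ)) (hℓ : 0 < ℓ θ) :
    Tendsto (fun u => 1 / pprime b s θ (pscaleInv ℓ b s θ u)) (𝓝[>] 0) (𝓝 1) := by
  have h0 : (0 : ℝ) ∈ realIco (pEnd ℓ b s θ) := by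
    simpa [pscale_zero] using (bijOn_pscale hint).mapsTo (zero_mem_realIco hℓ)
  have hcont : ContinuousWithinAt (fun u => 1 / pprime b s θ (pscaleInv ℓ b s θ u))
      (realIco (pEnd ℓ b s θ)) 0 :=
    continuousWithinAt_const.div
      ((continuousOn_pprime hint _ (mapsTo_pscaleInv hint h0)).comp
        (continuousOn_pscaleInv hint 0 h0) (mapsTo_pscaleInv hint))
      (pprime_pos _).ne'
  simpa only [pscaleInv_zero hint hℓ, pprime_zero, div_one] using
    hcont.tendsto.mono_left ((nhdsWithin_mono _ Ioi_subset_Ici_self).trans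
      (nhdsWithin_le_of_mem (realIco_mem_nhdsGE h0)))

theorem one_div_pprime_pscaleInv_sub_eq_integral (hint : RatioIntegrable b s θ (ℓ θ)) {u₁ u₂ : ℝ}
    (hu₁ : 0 ≤ u₁) (hu₁₂ : u₁ ≤ u₂) (hu₂ : u₂ ∈ realIco (pEnd ℓ b s θ)) :
    1 / pprime b s θ (pscaleInv ℓ b s θ u₂) - 1 / pprime b s θ (pscaleInv ℓ b s θ u₁)
      = ∫ u in u₁..u₂, 2 * b (pscaleInv ℓ b s θ u) θ /
          (s (pscaleInv ℓ b s θ u) θ ^ 2 * pprime b s θ (pscaleInv ℓ b s θ u) ^ 2) := by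
  have hu₁' := mem_realIco_of_le hu₁ hu₁₂ hu₂
  set q := pscaleInv ℓ b s θ
  have hx₁ := mapsTo_pscaleInv hint hu₁'
  have hx₂ := mapsTo_pscaleInv hint hu₂
  have hx₁₂ : q u₁ ≤ q u₂ := (strictMonoOn_pscaleInv hint).monotoneOn hu₁' hu₂ hu₁₂
  have hsub : uIcc (q u₁) (q u₂) ⊆ realIco (ℓ θ) := by
    rw [uIcc_of_le hx₁₂]
    exact ordConnected_realIco.out hx₁ hx₂
  rw [one_div_pprime_sub_eq_integral hint hx₁.1 hx₁₂ hx₂]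
  -- substitute `u = p_θ(x)`
  conv_rhs => rw [← pscale_pscaleInv hint hu₁', ← pscale_pscaleInv hint hu₂]
  rw [← intervalIntegral.integral_comp_mul_deriv_of_deriv_nonneg
    ((continuousOn_pscale hint).mono hsub)
    (fun x hx => hasDerivAt_pscale hint ((le_min hx₁.1 hx₂.1).trans_lt hx.1)
      (hsub (Ioo_subset_Icc_self hx)))
    (fun x _ => (pprime_pos x).le)]
  refine intervalIntegral.integral_congr fun x hx => ?_
  simp only [comp_apply, q, pscaleInv_pscale hint (hsub hx)]

end RadialScaleInverse

/-- Under Condition (C), each `p_θ` has a strictly increasing continuous inverse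
`q_θ : [0, p_θ(ℓ(θ)−)) → [0, ℓ(θ))` with `q_θ(0) = 0`, derivative
`q′_θ = 1/(p′_θ ∘ q_θ)` with `q′_θ(0+) = 1`, and second derivative
`q″_θ = 2 b(q_θ,θ)/(s(q_θ,θ)² (p′_θ(q_θ))²)` in the sense of an integral identity. -/
theorem radial_scale_inverse_properties
    (ℓ : ℝ → ℝ≥0∞) (b s : ℝ → ℝ → ℝ) (h : CondC ℓ b s) :
    ∀ θ ∈ Ico (0:ℝ) (2 * Real.pi), ∃ q : ℝ → ℝ,
      (∀ u : ℝ, 0 ≤ u → ENNReal.ofReal u < pEnd ℓ b s θ →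
        0 ≤ q u ∧ ENNReal.ofReal (q u) < ℓ θ ∧ pscale b s θ (q u) = u) ∧
      (∀ r : ℝ, 0 ≤ r → ENNReal.ofReal r < ℓ θ →
        ENNReal.ofReal (pscale b s θ r) < pEnd ℓ b s θ ∧ q (pscale b s θ r) = r) ∧
      q 0 = 0 ∧
      (∀ u₁ u₂ : ℝ, 0 ≤ u₁ → u₁ < u₂ → ENNReal.ofReal u₂ < pEnd ℓ b s θ →
        q u₁ < q u₂) ∧
      ContinuousOn q {u : ℝ | 0 ≤ u ∧ ENNReal.ofReal u < pEnd ℓ b s θ} ∧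
      (∀ u : ℝ, 0 ≤ u → ENNReal.ofReal u < pEnd ℓ b s θ →
        HasDerivWithinAt q (1 / pprime b s θ (q u))
          {w : ℝ | 0 ≤ w ∧ ENNReal.ofReal w < pEnd ℓ b s θ} u) ∧
      Filter.Tendsto (fun u => 1 / pprime b s θ (q u)) (nhdsWithin 0 (Ioi 0)) (nhds 1) ∧
      (∀ u₁ u₂ : ℝ, 0 ≤ u₁ → u₁ ≤ u₂ → ENNReal.ofReal u₂ < pEnd ℓ b s θ →
        1 / pprime b s θ (q u₂) - 1 / pprime b s θ (q u₁)
          = ∫ u in u₁..u₂,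
              2 * b (q u) θ / ((s (q u) θ) ^ 2 * (pprime b s θ (q u)) ^ 2)) := by
  intro θ hθ
  have hint := h.ratioIntegrable hθ
  have hℓ : 0 < ℓ θ := h.ell_pos.trans_le (iInf₂_le θ hθ)
  refine ⟨pscaleInv ℓ b s θ,
    fun u hu hup => ⟨(mapsTo_pscaleInv hint ⟨hu, hup⟩).1, (mapsTo_pscaleInv hint ⟨hu, hup⟩).2,
      pscale_pscaleInv hint ⟨hu, hup⟩⟩,
    fun r hr hrℓ => ⟨((bijOn_pscale hint).mapsTo ⟨hr, hrℓ⟩).2, pscaleInv_pscale hint ⟨hr, hrℓ⟩⟩,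
    pscaleInv_zero hint hℓ,
    fun u₁ u₂ hu₁ hu₁₂ hu₂ => strictMonoOn_pscaleInv hint
      (mem_realIco_of_le hu₁ hu₁₂.le ⟨hu₁.trans hu₁₂.le, hu₂⟩) ⟨hu₁.trans hu₁₂.le, hu₂⟩ hu₁₂,
    continuousOn_pscaleInv hint,
    fun u hu hup => hasDerivWithinAt_pscaleInv hint ⟨hu, hup⟩,
    tendsto_one_div_pprime_pscaleInv hint hℓ,
    fun u₁ u₂ hu₁ hu₁₂ hu₂ =>
      one_div_pprime_pscaleInv_sub_eq_integral hint hu₁ hu₁₂ ⟨hu₁.trans hu₁₂, hu₂⟩⟩
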